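/- arXiv:2309.15628 — 4 statements merged into one kernel-verified Lean document; each statement's English description precedes it below -/
import Mathlib

section
/- For every integer h ≥ 2 there exists a graceful labelling of the path with h vertices in which one of the two leaves (endpoints of the path) receives the label 0, and there also exists a graceful labelling of the path with h vertices in which one of the two leaves receives the label 1. -/
/-- `f` is a graceful labelling of the path with `h` vertices, whose vertices
(in order along the path) are indexed `0, 1, …, h-1`: the labels `f 0, …, f (h-1)`
are an injective assignment of the integers `0, …, h-1`, and the absolute
differences of the labels of the endpoints of the `h-1` edges are exactly
`1, 2, …, h-1`, each occurring once. -/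
def IsGracefulPathLabelling (h : ℕ) (f : ℕ → ℕ) : Prop :=
  (∀ i < h, f i < h) ∧
  (∀ i < h, ∀ j < h, f i = f j → i = j) ∧
  (∀ d, 1 ≤ d → d < h → ∃! i, i + 1 < h ∧ Nat.dist (f i) (f (i + 1)) = d)

/-- Standard zigzag labelling `0, h-1, 1, h-2, 2, …`. -/
def zig (h : ℕ) : ℕ → ℕ := fun i => if i % 2 = 0 then i / 2 else h - 1 - i / 2

lemma zig_dist (h : ℕ) (i : ℕ) (hi : i + 1 < h) :
    Nat.dist (zig h i) (zig h (i + 1)) = h - 1 - i := by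
  unfold zig
  rcases Nat.even_or_odd i with he | ho
  · have h2 : i % 2 = 0 := Nat.even_iff.mp he
    have h3 : (i + 1) % 2 = 1 := by omega
    simp [h2, h3, Nat.dist]
    omega
  · have h2 : i % 2 = 1 := Nat.odd_iff.mp ho
    have h3 : (i + 1) % 2 = 0 := by omega
    simp [h2, h3, Nat.dist]
    omega

lemma zig_graceful (h : ℕ) (hh : 2 ≤ h) : IsGracefulPathLabelling h (zig h) := by
  refine ⟨?_, ?_, ?_⟩
  · intro i hi
    unfold zig
    split <;> omega
  · intro i hi j hj hij
    unfold zig at hij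
    split at hij <;> split at hij <;> omega
  · intro d hd1 hd2
    refine ⟨h - 1 - d, ⟨by omega, ?_⟩, ?_⟩
    · have := zig_dist h (h - 1 - d) (by omega)
      omega
    · rintro y ⟨hy, hdy⟩
      have := zig_dist h y hy
      omega

/-- The recursive step function: from an endpoint-1 labelling `g` of the path with
`k` vertices, build an endpoint-1 labelling of the path with `k+3` vertices. -/
def F (k : ℕ) (g : ℕ → ℕ) : ℕ → ℕ
  | 0 => 1
  | 1 => k + 2
  | 2 => 0
  | (j + 3) => k + 1 - g j

lemma F_dist_tail (k : ℕ) (g : ℕ → ℕ) (hb : ∀ i < k, g i < k) (j : ℕ) (hj : j + 1 < k) :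
    Nat.dist (F k g (j + 3)) (F k g (j + 4)) = Nat.dist (g j) (g (j + 1)) := by
  have h1 : g j < k := hb j (by omega)
  have h2 : g (j + 1) < k := hb (j + 1) hj
  show Nat.dist (k + 1 - g j) (k + 1 - g (j + 1)) = _
  simp only [Nat.dist]
  omega

lemma step (k : ℕ) (hk : 2 ≤ k) (g : ℕ → ℕ) (hg : IsGracefulPathLabelling k g)
    (hg0 : g 0 = 1) :
    IsGracefulPathLabelling (k + 3) (F k g) ∧ F k g 0 = 1 := by
  obtain ⟨hb, hinj, hd⟩ := hg
  refine ⟨⟨?_, ?_, ?_⟩, rfl⟩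
  · intro i hi
    rcases i with _ | _ | _ | i
    · show (1 : ℕ) < k + 3; omega
    · show k + 2 < k + 3; omega
    · show (0 : ℕ) < k + 3; omega
    · show k + 1 - g i < k + 3; omega
  · intro i hi j hj hij
    rcases i with _ | _ | _ | i <;> rcases j with _ | _ | _ | j <;>
      simp only [F] at hij <;>
      first
      | omega
      | (have := hb i (by omega); omega)
      | (have := hb j (by omega); omega)
      | (have hbi := hb i (by omega)
         have hbj := hb j (by omega)
         have hgij : g i = g j := by omega
         have := hinj i (by omega) j (by omega) hgij
         omega)
  · intro d hd1 hd2
    have dist01 : Nat.dist (F k g 0) (F k g 1) = k + 1 := by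
      show Nat.dist 1 (k + 2) = k + 1
      simp [Nat.dist]
    have dist12 : Nat.dist (F k g 1) (F k g 2) = k + 2 := by
      show Nat.dist (k + 2) 0 = k + 2
      simp [Nat.dist]
    have dist23 : Nat.dist (F k g 2) (F k g 3) = k := by
      show Nat.dist 0 (k + 1 - g 0) = k
      rw [hg0]
      simp [Nat.dist]
    have tail_small : ∀ j, j + 1 < k → Nat.dist (g j) (g (j + 1)) < k := by
      intro j hj
      have := hb j (by omega)
      have := hb (j + 1) hj
      simp only [Nat.dist]
      omega
    rcases Nat.lt_or_ge d k with hdk | hdk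
    · -- d ≤ k - 1 : comes from the tail
      obtain ⟨j, ⟨hj1, hj2⟩, hju⟩ := hd d hd1 hdk
      refine ⟨j + 3, ⟨by omega, ?_⟩, ?_⟩
      · rw [show j + 3 + 1 = j + 4 from rfl, F_dist_tail k g hb j hj1, hj2]
      · rintro y ⟨hy, hdy⟩
        rcases y with _ | _ | _ | y
        · norm_num at hdy; omega
        · norm_num at hdy; omega
        · norm_num at hdy; omega
        · have hy' : y + 1 < k := by omega
          rw [show y + 3 + 1 = y + 4 from rfl, F_dist_tail k g hb y hy'] at hdy
          have := hju y ⟨hy', hdy⟩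
          omega
    · -- d ∈ {k, k+1, k+2}
      have tail_ne : ∀ y, y + 1 < k → Nat.dist (F k g (y + 3)) (F k g (y + 4)) ≠ d := by
        intro y hy
        rw [F_dist_tail k g hb y hy]
        have := tail_small y hy
        omega
      rcases (show d = k ∨ d = k + 1 ∨ d = k + 2 by omega) with rfl | rfl | rfl
      · refine ⟨2, ⟨by omega, dist23⟩, ?_⟩
        rintro y ⟨hy, hdy⟩
        rcases y with _ | _ | _ | y
        · norm_num at hdy; omega
        · norm_num at hdy; omega
        · rfl
        · exact absurd hdy (tail_ne y (by omega))
      · refine ⟨0, ⟨by omega, dist01⟩, ?_⟩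
        rintro y ⟨hy, hdy⟩
        rcases y with _ | _ | _ | y
        · rfl
        · norm_num at hdy; omega
        · norm_num at hdy; omega
        · exact absurd hdy (tail_ne y (by omega))
      · refine ⟨1, ⟨by omega, dist12⟩, ?_⟩
        rintro y ⟨hy, hdy⟩
        rcases y with _ | _ | _ | y
        · norm_num at hdy; omega
        · rfl
        · norm_num at hdy; omega
        · exact absurd hdy (tail_ne y (by omega))

def b2 : ℕ → ℕ
  | 0 => 1
  | _ => 0

def b3 : ℕ → ℕ
  | 0 => 1
  | 1 => 0
  | _ => 2

def b4 : ℕ → ℕ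
  | 0 => 1
  | 1 => 2
  | 2 => 0
  | _ => 3

lemma base2 : IsGracefulPathLabelling 2 b2 ∧ b2 0 = 1 := by
  refine ⟨⟨?_, ?_, ?_⟩, rfl⟩
  · intro i hi; interval_cases i <;> simp [b2]
  · intro i hi j hj hij
    interval_cases i <;> interval_cases j <;> simp_all [b2]
  · intro d hd1 hd2
    have : d = 1 := by omega
    subst this
    refine ⟨0, ⟨by norm_num, by simp [b2, Nat.dist]⟩, ?_⟩
    rintro y ⟨hy, _⟩; omega

lemma base3 : IsGracefulPathLabelling 3 b3 ∧ b3 0 = 1 := by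
  refine ⟨⟨?_, ?_, ?_⟩, rfl⟩
  · intro i hi; interval_cases i <;> simp [b3]
  · intro i hi j hj hij
    interval_cases i <;> interval_cases j <;> simp_all [b3]
  · intro d hd1 hd2
    interval_cases d
    · refine ⟨0, ⟨by norm_num, by simp [b3, Nat.dist]⟩, ?_⟩
      rintro y ⟨hy, hdy⟩
      have hy' : y ≤ 1 := by omega
      interval_cases y
      · rfl
      · simp [b3, Nat.dist] at hdy
    · refine ⟨1, ⟨by norm_num, by simp [b3, Nat.dist]⟩, ?_⟩
      rintro y ⟨hy, hdy⟩
      have hy' : y ≤ 1 := by omega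
      interval_cases y
      · simp [b3, Nat.dist] at hdy
      · rfl

lemma base4 : IsGracefulPathLabelling 4 b4 ∧ b4 0 = 1 := by
  refine ⟨⟨?_, ?_, ?_⟩, rfl⟩
  · intro i hi; interval_cases i <;> simp [b4]
  · intro i hi j hj hij
    interval_cases i <;> interval_cases j <;> simp_all [b4]
  · intro d hd1 hd2
    interval_cases d
    · refine ⟨0, ⟨by norm_num, by simp [b4, Nat.dist]⟩, ?_⟩
      rintro y ⟨hy, hdy⟩
      have hy' : y ≤ 2 := by omega
      interval_cases y
      · rfl
      · simp [b4, Nat.dist] at hdy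
      · simp [b4, Nat.dist] at hdy
    · refine ⟨1, ⟨by norm_num, by simp [b4, Nat.dist]⟩, ?_⟩
      rintro y ⟨hy, hdy⟩
      have hy' : y ≤ 2 := by omega
      interval_cases y
      · simp [b4, Nat.dist] at hdy
      · rfl
      · simp [b4, Nat.dist] at hdy
    · refine ⟨2, ⟨by norm_num, by simp [b4, Nat.dist]⟩, ?_⟩
      rintro y ⟨hy, hdy⟩
      have hy' : y ≤ 2 := by omega
      interval_cases y
      · simp [b4, Nat.dist] at hdy
      · simp [b4, Nat.dist] at hdy
      · rfl

lemma ones : ∀ h, 2 ≤ h → ∃ f : ℕ → ℕ, IsGracefulPathLabelling h f ∧ f 0 = 1 := by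
  intro h
  induction h using Nat.strong_induction_on with
  | _ h ih =>
    intro hh
    rcases (show h = 2 ∨ h = 3 ∨ h = 4 ∨ 5 ≤ h by omega) with rfl | rfl | rfl | h5
    · exact ⟨b2, base2⟩
    · exact ⟨b3, base3⟩
    · exact ⟨b4, base4⟩
    · obtain ⟨g, hg, hg0⟩ := ih (h - 3) (by omega) (by omega)
      have hs := step (h - 3) (by omega) g hg hg0
      rw [show h - 3 + 3 = h by omega] at hs
      exact ⟨F (h - 3) g, hs⟩

theorem stmt4 (h : ℕ) (hh : 2 ≤ h) :
    (∃ f : ℕ → ℕ, IsGracefulPathLabelling h f ∧ (f 0 = 0 ∨ f (h - 1) = 0)) ∧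
    (∃ f : ℕ → ℕ, IsGracefulPathLabelling h f ∧ (f 0 = 1 ∨ f (h - 1) = 1)) := by
  constructor
  · exact ⟨zig h, zig_graceful h hh, Or.inl (by simp [zig])⟩
  · obtain ⟨f, hf, hf0⟩ := ones h hh
    exact ⟨f, hf, Or.inl hf0⟩
end

section
/- Let ℓ ≥ 11 be an integer with ℓ ≡ 3 (mod 8). Then there exists an ℓ-cycle C with vertices in Z_{2ℓ} × {0,1} containing exactly (ℓ−3)/2 edges of pairwise distinct 0-pure differences, exactly (ℓ−1)/2 edges of pairwise distinct 1-pure differences, and exactly two mixed edges, of mixed differences 0 and ℓ, such that: (i) C contains no edge of 0-pure difference ±2, ±(ℓ−5)/2 or ℓ, and no edge of 1-pure difference ±(ℓ−5)/2 or ℓ; (ii) for every x ∈ Z_{2ℓ}, if x_0 is a vertex of C then x_1 is also a vertex of C; (iii) C and all of its translates by elements t ∈ Z_{2ℓ} are equitably 2-coloured under the standard colouring. -/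
/-- Vertices: `a_i` is the pair `(a, i)` with `a : ZMod (2ℓ)` and `i : Bool`
(part `0` is `false`, part `1` is `true`). -/
abbrev Pt (ℓ : ℕ) := ZMod (2 * ℓ) × Bool

/-- The standard colouring (red = `true`): `a_0` is red iff `0 ≤ a ≤ ℓ-1`,
and `a_1` is red iff `ℓ ≤ a ≤ 2ℓ-1`. -/
def stdColour (ℓ : ℕ) (x : Pt ℓ) : Bool :=
  xor (decide (x.1.val < ℓ)) x.2

/-- The edge of the cycle `c` from its `j`-th to its `(j+1)`-st vertex is mixed
(its endpoints lie in different parts). -/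
abbrev mixedEdge {ℓ : ℕ} (c : ZMod ℓ → Pt ℓ) (j : ZMod ℓ) : Prop :=
  (c j).2 ≠ (c (j + 1)).2

/-- The mixed difference of the `j`-th edge of `c` (oriented from the part-`0`
endpoint `a_0` to the part-`1` endpoint `b_1`, giving `b - a`). -/
def mixedDiff {ℓ : ℕ} (c : ZMod ℓ → Pt ℓ) (j : ZMod ℓ) : ZMod (2 * ℓ) :=
  if (c j).2 = false then (c (j + 1)).1 - (c j).1 else (c j).1 - (c (j + 1)).1

/-- The `j`-th edge of `c` is `i`-pure: both endpoints lie in part `i`. -/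
abbrev pureEdge {ℓ : ℕ} (c : ZMod ℓ → Pt ℓ) (i : Bool) (j : ZMod ℓ) : Prop :=
  (c j).2 = i ∧ (c (j + 1)).2 = i

/-- A representative of the (±) pure difference of the `j`-th edge of `c`. -/
def pureDiff {ℓ : ℕ} (c : ZMod ℓ → Pt ℓ) (j : ZMod ℓ) : ZMod (2 * ℓ) :=
  (c (j + 1)).1 - (c j).1

/-- The cycTranslate of the cycle `c` by `t`: add `t` to every first coordinate. -/
def cycTranslate {ℓ : ℕ} (t : ZMod (2 * ℓ)) (c : ZMod ℓ → Pt ℓ) : ZMod ℓ → Pt ℓ :=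
  fun j => ((c j).1 + t, (c j).2)

/-- Number of vertices of the cycle `c` coloured `true` (red). -/
def redCount {V : Type} {n : ℕ} [NeZero n] (colour : V → Bool) (c : ZMod n → V) : ℕ :=
  (Finset.univ.filter fun j => colour (c j) = true).card

/-- The cycle `c` is equitably 2-coloured: each colour appears on
`⌊n/2⌋` or `⌈n/2⌉` of its vertices. -/
def IsEquitable {V : Type} {n : ℕ} [NeZero n] (colour : V → Bool) (c : ZMod n → V) : Prop :=
  redCount colour c = n / 2 ∨ redCount colour c = (n + 1) / 2

def zf (n r : ℕ) : ℕ :=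
  if r % 2 = 1 then 2*n+2 - (r-1)/2
  else if r = 0 then 0
  else if r = 2 then 1
  else if r = 2*n then n+2
  else r/2+1

def qf (n s : ℕ) : ℕ :=
  if s + 2 ≤ 2*n then zf n s
  else if s = 2*n-1 then n+2
  else if s = 2*n then n+3
  else 5*n+5

def vf (n k : ℕ) : ℕ := if k < 2*n+1 then zf n (2*n - k) else qf n (k - (2*n+1))

lemma zf_le {n : ℕ} (hn : 4 ≤ n) {r : ℕ} (hr : r ≤ 2*n) : zf n r ≤ 2*n+2 := by
  unfold zf; split_ifs <;> omega

lemma zf_inj {n : ℕ} (hn : 4 ≤ n) {r r' : ℕ} (hr : r ≤ 2*n) (hr' : r' ≤ 2*n) (hne : r ≠ r') :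
    zf n r ≠ zf n r' := by
  unfold zf; split_ifs <;> omega

lemma zf_ne_special {n : ℕ} (hn : 4 ≤ n) {r : ℕ} (hr : r + 2 ≤ 2*n) :
    zf n r ≠ n+2 ∧ zf n r ≠ n+3 := by
  unfold zf; split_ifs <;> omega

lemma qf_inj {n : ℕ} (hn : 4 ≤ n) {s s' : ℕ} (hs : s ≤ 2*n+1) (hs' : s' ≤ 2*n+1) (hne : s ≠ s') :
    qf n s ≠ qf n s' := by
  unfold qf; split_ifs <;>
  first
  | omega
  | (exact zf_inj hn (by omega) (by omega) (by omega))
  | (exact (zf_ne_special hn (by omega)).1)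
  | (exact (zf_ne_special hn (by omega)).2)
  | (exact ((zf_ne_special hn (by omega)).1).symm)
  | (exact ((zf_ne_special hn (by omega)).2).symm)
  | (have := zf_le hn (show s ≤ 2*n by omega); omega)
  | (have := zf_le hn (show s' ≤ 2*n by omega); omega)

lemma vf_le {n : ℕ} (hn : 4 ≤ n) {k : ℕ} (hk : k ≤ 4*n+2) : vf n k ≤ 5*n+5 := by
  unfold vf qf
  split_ifs <;>
  first
  | omega
  | (have := zf_le hn (show 2*n-k ≤ 2*n by omega); omega)
  | (have := zf_le hn (show k-(2*n+1) ≤ 2*n by omega); omega)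

lemma vf_inj {n : ℕ} (hn : 4 ≤ n) {k k' : ℕ} (hk : k ≤ 4*n+2) (hk' : k' ≤ 4*n+2)
    (hne : k ≠ k') (hpart : (2*n+1 ≤ k) ↔ (2*n+1 ≤ k')) : vf n k ≠ vf n k' := by
  unfold vf
  split_ifs <;>
  first
  | omega
  | (exact zf_inj hn (by omega) (by omega) (by omega))
  | (exact qf_inj hn (by omega) (by omega) (by omega))

lemma zdist {n : ℕ} (hn : 4 ≤ n) {r' r : ℕ} (hr' : r' + 1 = r) (hr : r ≤ 2*n) :
    Nat.dist (zf n r') (zf n r) =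
      if r ≤ 3 then 2*n+3-r else if r + 1 ≤ 2*n then 2*n+2-r else 1 := by
  simp only [Nat.dist]; unfold zf; split_ifs <;> omega

lemma d0_eq {n : ℕ} (hn : 4 ≤ n) {k : ℕ} (hk : k < 2*n) :
    Nat.dist (vf n k) (vf n (k+1)) = if k = 0 then 1 else if k + 4 ≤ 2*n then k+2 else k+3 := by
  unfold vf
  rw [if_pos (by omega), if_pos (by omega), Nat.dist_comm,
    zdist hn (show (2*n-(k+1)) + 1 = 2*n-k by omega) (by omega)]
  split_ifs <;> omega

lemma qdist {n : ℕ} (hn : 4 ≤ n) {s : ℕ} (hs : s ≤ 2*n) :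
    Nat.dist (qf n s) (qf n (s+1)) =
      (if s + 1 ≤ 3 then 2*n+2-s else if s+3 ≤ 2*n then 2*n+1-s
       else if s = 2*n-2 then 2 else if s = 2*n-1 then 1 else 4*n+2) := by
  unfold qf
  split_ifs <;>
  first
  | omega
  | (rw [zdist hn rfl (by omega)]; split_ifs <;> omega)
  | (simp only [Nat.dist]; omega)
  | (simp only [Nat.dist]; unfold zf; split_ifs <;> omega)

lemma d1_eq {n : ℕ} (hn : 4 ≤ n) {k : ℕ} (hk : 2*n+1 ≤ k) (hk2 : k ≤ 4*n+1) :
    Nat.dist (vf n k) (vf n (k+1)) =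
      (if k ≤ 2*n+3 then 4*n+3-k else if k+3 ≤ 4*n+1 then 4*n+2-k
       else if k = 4*n-1 then 2 else if k = 4*n then 1 else 4*n+2) := by
  have h1 : vf n k = qf n (k - (2*n+1)) := by unfold vf; rw [if_neg (by omega)]
  have h2 : vf n (k+1) = qf n (k+1 - (2*n+1)) := by unfold vf; rw [if_neg (by omega)]
  have h3 : k + 1 - (2*n+1) = (k - (2*n+1)) + 1 := by omega
  rw [h1, h2, h3, qdist hn (by omega)]
  split_ifs <;> omega

def pk (n k : ℕ) : ℕ := if 2 ≤ k then 4*n+1 - k else if k = 0 then 4*n else 4*n+1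
def kp (n k' : ℕ) : ℕ := if k' + 2 ≤ 4*n+1 then 4*n+1-k' else if k' = 4*n then 0 else 1

lemma pk_bounds {n k : ℕ} (hn : 4 ≤ n) (hk : k ≤ 2*n) : 2*n+1 ≤ pk n k ∧ pk n k ≤ 4*n+1 := by
  unfold pk; split_ifs <;> omega

lemma vf_pk {n : ℕ} (hn : 4 ≤ n) {k : ℕ} (hk : k ≤ 2*n) : vf n (pk n k) = vf n k := by
  have hb := pk_bounds hn hk
  have h1 : vf n (pk n k) = qf n (pk n k - (2*n+1)) := by unfold vf; rw [if_neg (by omega)]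
  have h2 : vf n k = zf n (2*n - k) := by unfold vf; rw [if_pos (by omega)]
  rw [h1, h2]
  unfold pk at *
  unfold qf
  split_ifs at * <;>
  first
  | omega
  | (congr 1; omega)
  | (unfold zf; split_ifs <;> omega)

lemma kp_pk {n k : ℕ} (hn : 4 ≤ n) (hk : k ≤ 2*n) : kp n (pk n k) = k := by
  unfold pk kp; split_ifs <;> omega

lemma pk_kp {n k' : ℕ} (hn : 4 ≤ n) (h1 : 2*n+1 ≤ k') (h2 : k' ≤ 4*n+1) : pk n (kp n k') = k' := by
  unfold pk kp; split_ifs <;> first | omega | exact ‹False›.elim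

lemma kp_bounds {n k' : ℕ} (hn : 4 ≤ n) (h1 : 2*n+1 ≤ k') (h2 : k' ≤ 4*n+1) : kp n k' ≤ 2*n := by
  unfold kp; split_ifs <;> omega

lemma natCast_inj_of_lt {N : ℕ} [NeZero N] {a b : ℕ} (ha : a < N) (hb : b < N)
    (h : (a : ZMod N) = b) : a = b := by
  have := congrArg ZMod.val h
  rwa [ZMod.val_cast_of_lt ha, ZMod.val_cast_of_lt hb] at this

lemma natCast_ne_neg {N : ℕ} [NeZero N] {a b : ℕ} (h0 : 0 < a + b) (h1 : a + b ≠ N)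
    (h2 : a + b < 2*N) : (a : ZMod N) ≠ -b := by
  intro h
  have hz : ((a + b : ℕ) : ZMod N) = 0 := by push_cast; rw [h]; ring
  rw [ZMod.natCast_eq_zero_iff] at hz
  obtain ⟨t, ht⟩ := hz
  rcases t with _ | _ | t
  · omega
  · omega
  · have : N * 2 ≤ N * (t+1+1) := Nat.mul_le_mul_left _ (by omega)
    omega

lemma pm_ne_pm {N : ℕ} [NeZero N] {d e : ℕ} {x y : ZMod N}
    (hx : x = (d : ZMod N) ∨ x = -(d : ZMod N)) (hy : y = (e : ZMod N) ∨ y = -(e : ZMod N))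
    (hd : d < N) (he : e < N) (hne : d ≠ e) (h0 : 0 < d + e) (hN : d + e ≠ N)
    (h2 : d + e < 2*N) : x ≠ y ∧ x ≠ -y := by
  have A1 : (d : ZMod N) ≠ e := fun h => hne (natCast_inj_of_lt hd he h)
  have A2 : (d : ZMod N) ≠ -(e : ZMod N) := natCast_ne_neg h0 hN h2
  have A3 : (e : ZMod N) ≠ -(d : ZMod N) := natCast_ne_neg (by omega) (by omega) (by omega)
  rcases hx with rfl | rfl <;> rcases hy with rfl | rfl <;>
    constructor <;> (try simp only [neg_neg]) <;>
    first
      | exact A1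
      | exact A2
      | exact fun h => A3 h.symm
      | exact fun h => A1 (neg_inj.mp h)
      | exact fun h => A3 (neg_inj.mp h).symm
      | exact fun h => A2 (by rw [h])

lemma sub_eq_pm {N : ℕ} [NeZero N] (a b : ℕ) :
    ((b : ZMod N) - a = ((Nat.dist a b : ℕ) : ZMod N)) ∨
      ((b : ZMod N) - a = -((Nat.dist a b : ℕ) : ZMod N)) := by
  rcases le_total a b with h | h
  · left
    have hd : Nat.dist a b = b - a := by simp [Nat.dist]; omega
    rw [hd, Nat.cast_sub h]
  · right
    have hd : Nat.dist a b = a - b := by simp [Nat.dist]; omega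
    rw [hd, Nat.cast_sub h]
    ring

def cyc (n : ℕ) : ZMod (4*n+3) → Pt (4*n+3) :=
  fun j => ((vf n j.val : ZMod (2*(4*n+3))), decide (2*n+1 ≤ j.val))

theorem stmt7_main (n : ℕ) (hn : 4 ≤ n) [NeZero (4*n+3)] :
    ∃ c : ZMod (4*n+3) → Pt (4*n+3),
      Function.Injective c ∧
      (Finset.univ.filter fun j => pureEdge c false j).card = (4*n+3 - 3) / 2 ∧
      (Finset.univ.filter fun j => pureEdge c true j).card = (4*n+3 - 1) / 2 ∧
      (∀ i : Bool, ∀ j j', pureEdge c i j → pureEdge c i j' → j ≠ j' →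
        pureDiff c j ≠ pureDiff c j' ∧ pureDiff c j ≠ -pureDiff c j') ∧
      (∃ j₀ j₁ : ZMod (4*n+3), j₀ ≠ j₁ ∧ mixedEdge c j₀ ∧ mixedEdge c j₁ ∧
        mixedDiff c j₀ = 0 ∧ mixedDiff c j₁ = ((4*n+3 : ℕ) : ZMod (2 * (4*n+3))) ∧
        (∀ j, mixedEdge c j → j = j₀ ∨ j = j₁)) ∧
      (∀ j, pureEdge c false j →
        pureDiff c j ∉ ({2, -2, (((4*n+3 - 5) / 2 : ℕ) : ZMod (2 * (4*n+3))),
          -(((4*n+3 - 5) / 2 : ℕ) : ZMod (2 * (4*n+3))),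
          ((4*n+3 : ℕ) : ZMod (2 * (4*n+3)))} : Set (ZMod (2 * (4*n+3))))) ∧
      (∀ j, pureEdge c true j →
        pureDiff c j ∉ ({(((4*n+3 - 5) / 2 : ℕ) : ZMod (2 * (4*n+3))),
          -(((4*n+3 - 5) / 2 : ℕ) : ZMod (2 * (4*n+3))),
          ((4*n+3 : ℕ) : ZMod (2 * (4*n+3)))} : Set (ZMod (2 * (4*n+3))))) ∧
      (∀ x : ZMod (2 * (4*n+3)), (∃ j, c j = (x, false)) → ∃ j, c j = (x, true)) ∧
      (∀ t : ZMod (2 * (4*n+3)), IsEquitable (stdColour (4*n+3)) (cycTranslate t c)) := by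
  haveI hN2 : NeZero (2*(4*n+3)) := ⟨by omega⟩
  haveI : Fact (1 < 4*n+3) := ⟨by omega⟩
  have hvlt : ∀ j : ZMod (4*n+3), j.val < 4*n+3 := fun j => ZMod.val_lt j
  have hvcast : ∀ k : ℕ, k < 4*n+3 → ((k : ZMod (4*n+3))).val = k := fun k hk =>
    ZMod.val_cast_of_lt hk
  have hvinj : ∀ j j' : ZMod (4*n+3), j.val = j'.val → j = j' := fun j j' h =>
    ZMod.val_injective _ h
  have hsucc : ∀ j : ZMod (4*n+3), (j+1).val = if j.val = 4*n+2 then 0 else j.val + 1 := by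
    intro j
    rw [ZMod.val_add, ZMod.val_one]
    split_ifs with h
    · rw [h, show 4*n+2+1 = 4*n+3 from by omega, Nat.mod_self]
    · exact Nat.mod_eq_of_lt (by have := hvlt j; omega)
  have hc2 : ∀ j : ZMod (4*n+3), (cyc n j).2 = decide (2*n+1 ≤ j.val) := fun _ => rfl
  have hc1 : ∀ j : ZMod (4*n+3), (cyc n j).1 = ((vf n j.val : ℕ) : ZMod (2*(4*n+3))) :=
    fun _ => rfl
  have hvbound : ∀ j : ZMod (4*n+3), vf n j.val < 2*(4*n+3) := by
    intro j; have := vf_le hn (show j.val ≤ 4*n+2 by have := hvlt j; omega); omega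
  have hpe0 : ∀ j : ZMod (4*n+3), pureEdge (cyc n) false j ↔ j.val < 2*n := by
    intro j
    constructor
    · rintro ⟨h1, h2⟩
      rw [hc2, decide_eq_false_iff_not, not_le] at h1 h2
      rw [hsucc j] at h2
      by_cases h : j.val = 4*n+2
      · omega
      · rw [if_neg h] at h2; omega
    · intro h
      refine ⟨?_, ?_⟩ <;> rw [hc2, decide_eq_false_iff_not, not_le]
      · omega
      · rw [hsucc j, if_neg (by omega)]; omega
  have hpe1 : ∀ j : ZMod (4*n+3), pureEdge (cyc n) true j ↔ 2*n+1 ≤ j.val ∧ j.val ≤ 4*n+1 := by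
    intro j
    constructor
    · rintro ⟨h1, h2⟩
      rw [hc2, decide_eq_true_eq] at h1 h2
      rw [hsucc j] at h2
      by_cases h : j.val = 4*n+2
      · rw [if_pos h] at h2; omega
      · rw [if_neg h] at h2; have := hvlt j; omega
    · intro h
      refine ⟨?_, ?_⟩ <;> rw [hc2, decide_eq_true_eq]
      · omega
      · rw [hsucc j, if_neg (by omega)]; omega
  have hpd : ∀ j : ZMod (4*n+3), j.val ≠ 4*n+2 →
      pureDiff (cyc n) j
        = ((vf n (j.val+1) : ℕ) : ZMod (2*(4*n+3))) - ((vf n j.val : ℕ) : ZMod (2*(4*n+3))) := by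
    intro j h
    unfold pureDiff
    rw [hc1, hc1, hsucc j, if_neg h]
  have hpm : ∀ j : ZMod (4*n+3), j.val ≠ 4*n+2 →
      pureDiff (cyc n) j = ((Nat.dist (vf n j.val) (vf n (j.val+1)) : ℕ) : ZMod (2*(4*n+3))) ∨
      pureDiff (cyc n) j = -((Nat.dist (vf n j.val) (vf n (j.val+1)) : ℕ) : ZMod (2*(4*n+3))) := by
    intro j h; rw [hpd j h]; exact sub_eq_pm _ _
  have hd0 : ∀ k : ℕ, k < 2*n → 1 ≤ Nat.dist (vf n k) (vf n (k+1)) ∧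
      Nat.dist (vf n k) (vf n (k+1)) ≤ 2*n+2 ∧ Nat.dist (vf n k) (vf n (k+1)) ≠ 2 ∧
      Nat.dist (vf n k) (vf n (k+1)) ≠ 2*n-1 := by
    intro k hk; rw [d0_eq hn hk]; split_ifs <;> omega
  have hd0ne : ∀ k k' : ℕ, k < 2*n → k' < 2*n → k ≠ k' →
      Nat.dist (vf n k) (vf n (k+1)) ≠ Nat.dist (vf n k') (vf n (k'+1)) := by
    intro k k' hk hk' hne; rw [d0_eq hn hk, d0_eq hn hk']; split_ifs <;> omega
  have hd1 : ∀ k : ℕ, 2*n+1 ≤ k → k ≤ 4*n+1 → 1 ≤ Nat.dist (vf n k) (vf n (k+1)) ∧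
      Nat.dist (vf n k) (vf n (k+1)) ≤ 4*n+2 ∧ Nat.dist (vf n k) (vf n (k+1)) ≠ 2*n-1 := by
    intro k hk hk2; rw [d1_eq hn hk hk2]; split_ifs <;> omega
  have hd1ne : ∀ k k' : ℕ, 2*n+1 ≤ k → k ≤ 4*n+1 → 2*n+1 ≤ k' → k' ≤ 4*n+1 → k ≠ k' →
      Nat.dist (vf n k) (vf n (k+1)) ≠ Nat.dist (vf n k') (vf n (k'+1)) := by
    intro k k' hk hk2 hk' hk2' hne
    rw [d1_eq hn hk hk2, d1_eq hn hk' hk2']; split_ifs <;> omega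
  refine ⟨cyc n, ?_, ?_, ?_, ?_, ?_, ?_, ?_, ?_, ?_⟩
  · -- injectivity
    intro j j' h
    have h1 : (cyc n j).1 = (cyc n j').1 := congrArg Prod.fst h
    have h2 : (cyc n j).2 = (cyc n j').2 := congrArg Prod.snd h
    rw [hc1 j, hc1 j'] at h1
    rw [hc2 j, hc2 j'] at h2
    by_contra hne
    have hv : j.val ≠ j'.val := fun hv => hne (hvinj _ _ hv)
    have hvv : vf n j.val = vf n j'.val :=
      natCast_inj_of_lt (hvbound j) (hvbound j') h1
    have hpart : (2*n+1 ≤ j.val) ↔ (2*n+1 ≤ j'.val) := decide_eq_decide.mp h2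
    exact vf_inj hn (by have := hvlt j; omega) (by have := hvlt j'; omega) hv hpart hvv
  · -- count of 0-pure edges
    rw [show (4*n+3-3)/2 = 2*n from by omega, ← Finset.card_range (2*n)]
    refine Finset.card_bij' (fun j _ => j.val) (fun k _ => ((k : ℕ) : ZMod (4*n+3)))
      ?_ ?_ ?_ ?_
    · intro j hj
      rw [Finset.mem_filter] at hj; rw [Finset.mem_range]
      exact (hpe0 j).1 hj.2
    · intro k hk
      rw [Finset.mem_range] at hk; rw [Finset.mem_filter]
      exact ⟨Finset.mem_univ _, (hpe0 _).2 (by rw [hvcast k (by omega)]; omega)⟩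
    · intro j _
      exact ZMod.natCast_rightInverse j
    · intro k hk
      rw [Finset.mem_range] at hk; exact hvcast k (by omega)
  · -- count of 1-pure edges
    rw [show (4*n+3-1)/2 = 2*n+1 from by omega, ← Finset.card_range (2*n+1)]
    refine Finset.card_bij' (fun j _ => j.val - (2*n+1))
      (fun k _ => ((2*n+1+k : ℕ) : ZMod (4*n+3))) ?_ ?_ ?_ ?_
    · intro j hj
      rw [Finset.mem_filter] at hj; rw [Finset.mem_range]
      have := (hpe1 j).1 hj.2; omega
    · intro k hk
      rw [Finset.mem_range] at hk; rw [Finset.mem_filter]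
      exact ⟨Finset.mem_univ _, (hpe1 _).2 (by rw [hvcast _ (by omega)]; omega)⟩
    · intro j hj
      rw [Finset.mem_filter] at hj
      have := (hpe1 j).1 hj.2
      rw [show 2*n+1 + (j.val - (2*n+1)) = j.val from by omega]
      exact ZMod.natCast_rightInverse j
    · intro k hk
      rw [Finset.mem_range] at hk; rw [hvcast _ (by omega)]; omega
  · -- pairwise distinct pure differences
    intro i j j' hj hj' hne
    have hvne : j.val ≠ j'.val := fun hv => hne (hvinj _ _ hv)
    cases i
    · have hk := (hpe0 j).1 hj
      have hk' := (hpe0 j').1 hj'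
      obtain ⟨b1, b2, -, -⟩ := hd0 j.val hk
      obtain ⟨c1, c2, -, -⟩ := hd0 j'.val hk'
      exact pm_ne_pm (hpm j (by omega)) (hpm j' (by omega)) (by omega) (by omega)
        (hd0ne _ _ hk hk' hvne) (by omega) (by omega) (by omega)
    · have hk := (hpe1 j).1 hj
      have hk' := (hpe1 j').1 hj'
      obtain ⟨b1, b2, -⟩ := hd1 j.val hk.1 hk.2
      obtain ⟨c1, c2, -⟩ := hd1 j'.val hk'.1 hk'.2
      exact pm_ne_pm (hpm j (by omega)) (hpm j' (by omega)) (by omega) (by omega)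
        (hd1ne _ _ hk.1 hk.2 hk'.1 hk'.2 hvne) (by omega) (by omega) (by omega)
  · -- the two mixed edges
    have hv0 : ((2*n : ℕ) : ZMod (4*n+3)).val = 2*n := hvcast _ (by omega)
    have hv1 : ((4*n+2 : ℕ) : ZMod (4*n+3)).val = 4*n+2 := hvcast _ (by omega)
    have ha : vf n (2*n) = 0 := by unfold vf zf; split_ifs <;> omega
    have hb : vf n (2*n+1) = 0 := by unfold vf qf zf; split_ifs <;> omega
    have hcv : vf n (4*n+2) = 5*n+5 := by unfold vf qf; split_ifs <;> omega
    have hdv : vf n 0 = n+2 := by unfold vf zf; split_ifs <;> omega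
    refine ⟨((2*n : ℕ) : ZMod (4*n+3)), ((4*n+2 : ℕ) : ZMod (4*n+3)), ?_, ?_, ?_, ?_, ?_, ?_⟩
    · intro h
      have := congrArg ZMod.val h
      rw [hv0, hv1] at this; omega
    · show (cyc n _).2 ≠ (cyc n _).2
      rw [hc2, hc2, hsucc, hv0, if_neg (by omega),
        decide_eq_false (show ¬(2*n+1 ≤ 2*n) by omega),
        decide_eq_true (show 2*n+1 ≤ 2*n+1 by omega)]
      exact Bool.false_ne_true
    · show (cyc n _).2 ≠ (cyc n _).2
      rw [hc2, hc2, hsucc, hv1, if_pos rfl,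
        decide_eq_true (show 2*n+1 ≤ 4*n+2 by omega),
        decide_eq_false (show ¬(2*n+1 ≤ 0) by omega)]
      decide
    · unfold mixedDiff
      rw [if_pos (by rw [hc2, hv0]; exact decide_eq_false (by omega))]
      rw [hc1, hc1, hsucc, hv0, if_neg (by omega), ha, hb]
      simp
    · unfold mixedDiff
      rw [if_neg (by rw [hc2, hv1, decide_eq_true (show 2*n+1 ≤ 4*n+2 by omega)]; simp)]
      rw [hc1, hc1, hsucc, hv1, if_pos rfl, hcv, hdv]
      rw [← Nat.cast_sub (by omega), show 5*n+5 - (n+2) = 4*n+3 from by omega]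
    · intro j hj
      have hj' : (cyc n j).2 ≠ (cyc n (j+1)).2 := hj
      rw [hc2, hc2, hsucc j] at hj'
      by_cases h : j.val = 4*n+2
      · right; exact hvinj _ _ (by rw [hv1]; exact h)
      · left
        rw [if_neg h] at hj'
        have hval : j.val = 2*n := by
          by_contra hcon
          exact hj' (decide_eq_decide.mpr (by constructor <;> omega))
        exact hvinj _ _ (by rw [hv0]; exact hval)
  · -- avoided 0-pure differences
    intro j hj
    have hk := (hpe0 j).1 hj
    obtain ⟨b1, b2, b3, b4⟩ := hd0 j.val hk
    have hxy := hpm j (by omega)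
    simp only [Set.mem_insert_iff, Set.mem_singleton_iff, not_or]
    rw [show (4*n+3-5)/2 = 2*n-1 from by omega]
    have P2 := pm_ne_pm (e := 2) hxy (Or.inl (by norm_cast)) (by omega) (by omega)
      (by omega) (by omega) (by omega) (by omega)
    have Pc := pm_ne_pm (e := 2*n-1) hxy (Or.inl rfl) (by omega) (by omega)
      (by omega) (by omega) (by omega) (by omega)
    have Pl := pm_ne_pm (e := 4*n+3) hxy (Or.inl rfl) (by omega) (by omega)
      (by omega) (by omega) (by omega) (by omega)
    exact ⟨P2.1, by simpa using P2.2, Pc.1, by simpa using Pc.2, Pl.1⟩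
  · -- avoided 1-pure differences
    intro j hj
    have hk := (hpe1 j).1 hj
    obtain ⟨b1, b2, b3⟩ := hd1 j.val hk.1 hk.2
    have hxy := hpm j (by omega)
    simp only [Set.mem_insert_iff, Set.mem_singleton_iff, not_or]
    rw [show (4*n+3-5)/2 = 2*n-1 from by omega]
    have Pc := pm_ne_pm (e := 2*n-1) hxy (Or.inl rfl) (by omega) (by omega)
      (by omega) (by omega) (by omega) (by omega)
    have Pl := pm_ne_pm (e := 4*n+3) hxy (Or.inl rfl) (by omega) (by omega)
      (by omega) (by omega) (by omega) (by omega)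
    exact ⟨Pc.1, by simpa using Pc.2, Pl.1⟩
  · -- part 0 vertices appear in part 1
    rintro x ⟨j, hj⟩
    have h2 : (cyc n j).2 = false := congrArg Prod.snd hj
    rw [hc2, decide_eq_false_iff_not, not_le] at h2
    have h1 : (cyc n j).1 = x := congrArg Prod.fst hj
    rw [hc1] at h1
    have hkle : j.val ≤ 2*n := by omega
    have hpkb := pk_bounds hn hkle
    have hv : ((pk n j.val : ℕ) : ZMod (4*n+3)).val = pk n j.val := hvcast _ (by omega)
    refine ⟨((pk n j.val : ℕ) : ZMod (4*n+3)), Prod.ext_iff.mpr ⟨?_, ?_⟩⟩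
    · rw [hc1, hv, vf_pk hn hkle]; exact h1
    · rw [hc2, hv]; exact decide_eq_true (by omega)
  · -- equitability of all translates
    intro t
    unfold IsEquitable redCount
    have hRlow : ∀ j : ZMod (4*n+3), j.val ≤ 2*n →
        ((stdColour (4*n+3) (cycTranslate t (cyc n) j) = true) ↔
          ((((vf n j.val : ℕ) : ZMod (2*(4*n+3))) + t).val < 4*n+3)) := by
      intro j hj
      simp only [stdColour, cycTranslate]
      simp only [hc1 j, hc2 j]
      rw [decide_eq_false (show ¬(2*n+1 ≤ j.val) by omega), Bool.xor_false,
        decide_eq_true_eq]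
    have hRhigh : ∀ j : ZMod (4*n+3), 2*n+1 ≤ j.val →
        ((stdColour (4*n+3) (cycTranslate t (cyc n) j) = true) ↔
          ¬ ((((vf n j.val : ℕ) : ZMod (2*(4*n+3))) + t).val < 4*n+3)) := by
      intro j hj
      simp only [stdColour, cycTranslate]
      simp only [hc1 j, hc2 j]
      rw [decide_eq_true (show 2*n+1 ≤ j.val from hj), Bool.xor_true,
        Bool.not_eq_true', decide_eq_false_iff_not]
    have e1 := Finset.card_filter_add_card_filter_not
      (s := Finset.univ.filter (fun j : ZMod (4*n+3) =>
        stdColour (4*n+3) (cycTranslate t (cyc n) j) = true))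
      (p := fun j : ZMod (4*n+3) => j.val ≤ 2*n)
    rw [Finset.filter_filter, Finset.filter_filter] at e1
    have e2 := Finset.card_filter_add_card_filter_not
      (s := Finset.univ.filter (fun j : ZMod (4*n+3) =>
        (stdColour (4*n+3) (cycTranslate t (cyc n) j) = true) ∧ ¬ j.val ≤ 2*n))
      (p := fun j : ZMod (4*n+3) => j.val ≤ 4*n+1)
    rw [Finset.filter_filter, Finset.filter_filter] at e2
    have e3 := Finset.card_filter_add_card_filter_not
      (s := Finset.univ.filter (fun j : ZMod (4*n+3) => ¬ j.val ≤ 2*n ∧ j.val ≤ 4*n+1))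
      (p := fun j : ZMod (4*n+3) => stdColour (4*n+3) (cycTranslate t (cyc n) j) = true)
    rw [Finset.filter_filter, Finset.filter_filter] at e3
    have hB12 : (Finset.univ.filter (fun j : ZMod (4*n+3) =>
        ((stdColour (4*n+3) (cycTranslate t (cyc n) j) = true) ∧ ¬ j.val ≤ 2*n)
          ∧ j.val ≤ 4*n+1)).card
        = (Finset.univ.filter (fun j : ZMod (4*n+3) =>
        (¬ j.val ≤ 2*n ∧ j.val ≤ 4*n+1)
          ∧ stdColour (4*n+3) (cycTranslate t (cyc n) j) = true)).card := by
      rw [Finset.filter_congr (fun x _ => by tauto : ∀ x ∈ Finset.univ,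
        (((stdColour (4*n+3) (cycTranslate t (cyc n) x) = true) ∧ ¬ x.val ≤ 2*n)
          ∧ x.val ≤ 4*n+1) ↔
        ((¬ x.val ≤ 2*n ∧ x.val ≤ 4*n+1)
          ∧ stdColour (4*n+3) (cycTranslate t (cyc n) x) = true))]
    have hM : (Finset.univ.filter (fun j : ZMod (4*n+3) =>
        ¬ j.val ≤ 2*n ∧ j.val ≤ 4*n+1)).card = 2*n+1 := by
      rw [← Finset.card_range (2*n+1)]
      refine Finset.card_bij' (fun j _ => j.val - (2*n+1))
        (fun k _ => ((2*n+1+k : ℕ) : ZMod (4*n+3))) ?_ ?_ ?_ ?_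
      · intro j hj
        rw [Finset.mem_filter] at hj
        rw [Finset.mem_range]
        omega
      · intro k hk
        rw [Finset.mem_range] at hk
        rw [Finset.mem_filter]
        refine ⟨Finset.mem_univ _, ?_⟩
        rw [hvcast _ (by omega)]
        omega
      · intro j hj
        rw [Finset.mem_filter] at hj
        rw [show 2*n+1 + (j.val - (2*n+1)) = j.val from by omega]
        exact ZMod.natCast_rightInverse j
      · intro k hk
        rw [Finset.mem_range] at hk
        rw [hvcast _ (by omega)]
        omega
    have hbij : (Finset.univ.filter (fun j : ZMod (4*n+3) =>
        (stdColour (4*n+3) (cycTranslate t (cyc n) j) = true) ∧ j.val ≤ 2*n)).card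
        = (Finset.univ.filter (fun j : ZMod (4*n+3) =>
        (¬ j.val ≤ 2*n ∧ j.val ≤ 4*n+1)
          ∧ ¬ (stdColour (4*n+3) (cycTranslate t (cyc n) j) = true))).card := by
      refine Finset.card_bij' (fun j _ => ((pk n j.val : ℕ) : ZMod (4*n+3)))
        (fun j _ => ((kp n j.val : ℕ) : ZMod (4*n+3))) ?_ ?_ ?_ ?_
      · intro a ha
        rw [Finset.mem_filter] at ha
        have hra := ha.2.1
        have hva := ha.2.2
        have hb := pk_bounds hn hva
        have hv := hvcast (pk n a.val) (by omega)
        rw [Finset.mem_filter]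
        refine ⟨Finset.mem_univ _, ⟨by rw [hv]; omega, by rw [hv]; omega⟩, ?_⟩
        intro hr
        have hne := (hRhigh _ (by rw [hv]; omega)).1 hr
        rw [hv, vf_pk hn hva] at hne
        exact hne ((hRlow a hva).1 hra)
      · intro a ha
        rw [Finset.mem_filter] at ha
        have hma := ha.2.1
        have hra := ha.2.2
        have hb := kp_bounds (k' := a.val) hn (by omega) (by omega)
        have hv := hvcast (kp n a.val) (by omega)
        rw [Finset.mem_filter]
        refine ⟨Finset.mem_univ _, ?_, by rw [hv]; omega⟩
        rw [hRlow _ (by rw [hv]; omega), hv]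
        have hvv : vf n (kp n a.val) = vf n a.val := by
          have h1 := vf_pk hn (show kp n a.val ≤ 2*n from hb)
          rw [pk_kp hn (by omega) (by omega)] at h1
          exact h1.symm
        rw [hvv]
        have := (hRhigh a (by omega))
        rcases Nat.lt_or_ge ((((vf n a.val : ℕ) : ZMod (2*(4*n+3))) + t).val) (4*n+3) with
          hlt | hge
        · exact hlt
        · exact absurd (this.2 (by omega)) hra
      · intro a ha
        rw [Finset.mem_filter] at ha
        have hb := pk_bounds hn ha.2.2
        rw [hvcast (pk n a.val) (by omega), kp_pk hn ha.2.2]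
        exact ZMod.natCast_rightInverse a
      · intro a ha
        rw [Finset.mem_filter] at ha
        rw [hvcast (kp n a.val)
            (by have := kp_bounds hn (show 2*n+1 ≤ a.val by omega) (by omega); omega),
          pk_kp hn (by omega) (by omega)]
        exact ZMod.natCast_rightInverse a
    have hC : (Finset.univ.filter (fun j : ZMod (4*n+3) =>
        ((stdColour (4*n+3) (cycTranslate t (cyc n) j) = true) ∧ ¬ j.val ≤ 2*n)
          ∧ ¬ j.val ≤ 4*n+1)).card ≤ 1 := by
      refine Finset.card_le_one.mpr ?_
      intro a ha b hb
      rw [Finset.mem_filter] at ha hb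
      have h1 := hvlt a
      have h2 := hvlt b
      exact hvinj _ _ (by omega)
    omega

def c11 : ZMod 11 → Pt 11 := fun j =>
  (([4,5,1,6,0,0,6,4,5,1,15].getD j.val 0 : ZMod 22), decide (5 ≤ j.val))

set_option maxRecDepth 40000 in
theorem stmt7_eleven :
    ∃ c : ZMod 11 → Pt 11,
      Function.Injective c ∧
      (Finset.univ.filter fun j => pureEdge c false j).card = (11 - 3) / 2 ∧
      (Finset.univ.filter fun j => pureEdge c true j).card = (11 - 1) / 2 ∧
      (∀ i : Bool, ∀ j j', pureEdge c i j → pureEdge c i j' → j ≠ j' →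
        pureDiff c j ≠ pureDiff c j' ∧ pureDiff c j ≠ -pureDiff c j') ∧
      (∃ j₀ j₁ : ZMod 11, j₀ ≠ j₁ ∧ mixedEdge c j₀ ∧ mixedEdge c j₁ ∧
        mixedDiff c j₀ = 0 ∧ mixedDiff c j₁ = ((11:ℕ) : ZMod (2 * 11)) ∧
        (∀ j, mixedEdge c j → j = j₀ ∨ j = j₁)) ∧
      (∀ j, pureEdge c false j →
        pureDiff c j ∉ ({2, -2, (((11 - 5) / 2 : ℕ) : ZMod (2 * 11)),
          -(((11 - 5) / 2 : ℕ) : ZMod (2 * 11)),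
          ((11:ℕ) : ZMod (2 * 11))} : Set (ZMod (2 * 11)))) ∧
      (∀ j, pureEdge c true j →
        pureDiff c j ∉ ({(((11 - 5) / 2 : ℕ) : ZMod (2 * 11)),
          -(((11 - 5) / 2 : ℕ) : ZMod (2 * 11)),
          ((11:ℕ) : ZMod (2 * 11))} : Set (ZMod (2 * 11)))) ∧
      (∀ x : ZMod (2 * 11), (∃ j, c j = (x, false)) → ∃ j, c j = (x, true)) ∧
      (∀ t : ZMod (2 * 11), IsEquitable (stdColour 11) (cycTranslate t c)) := by
  refine ⟨c11, by decide, by decide, by decide, by decide, ?_, ?_, ?_, by decide,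
    by simp only [IsEquitable]; decide⟩
  · exact ⟨4, 10, by decide, by decide, by decide, by decide, by decide, by decide⟩
  · intro j hj
    simp only [Set.mem_insert_iff, Set.mem_singleton_iff]
    revert hj; revert j; decide
  · intro j hj
    simp only [Set.mem_insert_iff, Set.mem_singleton_iff]
    revert hj; revert j; decide

theorem stmt7 (ℓ : ℕ) (hℓ : 11 ≤ ℓ) (hmod8 : ℓ % 8 = 3) :
    letI : NeZero ℓ := ⟨by omega⟩
    ∃ c : ZMod ℓ → Pt ℓ,
      Function.Injective c ∧
      -- exactly (ℓ-3)/2 edges are 0-pure and exactly (ℓ-1)/2 edges are 1-pure,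
      (Finset.univ.filter fun j => pureEdge c false j).card = (ℓ - 3) / 2 ∧
      (Finset.univ.filter fun j => pureEdge c true j).card = (ℓ - 1) / 2 ∧
      -- with pairwise distinct (±) pure differences within each part,
      (∀ i : Bool, ∀ j j', pureEdge c i j → pureEdge c i j' → j ≠ j' →
        pureDiff c j ≠ pureDiff c j' ∧ pureDiff c j ≠ -pureDiff c j') ∧
      -- and exactly two mixed edges, of mixed differences 0 and ℓ;
      (∃ j₀ j₁ : ZMod ℓ, j₀ ≠ j₁ ∧ mixedEdge c j₀ ∧ mixedEdge c j₁ ∧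
        mixedDiff c j₀ = 0 ∧ mixedDiff c j₁ = (ℓ : ZMod (2 * ℓ)) ∧
        (∀ j, mixedEdge c j → j = j₀ ∨ j = j₁)) ∧
      -- (i) no edge of 0-pure difference ±2, ±(ℓ-5)/2 or ℓ,
      -- nor of 1-pure difference ±(ℓ-5)/2 or ℓ
      (∀ j, pureEdge c false j →
        pureDiff c j ∉ ({2, -2, (((ℓ - 5) / 2 : ℕ) : ZMod (2 * ℓ)),
          -(((ℓ - 5) / 2 : ℕ) : ZMod (2 * ℓ)),
          (ℓ : ZMod (2 * ℓ))} : Set (ZMod (2 * ℓ)))) ∧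
      (∀ j, pureEdge c true j →
        pureDiff c j ∉ ({(((ℓ - 5) / 2 : ℕ) : ZMod (2 * ℓ)),
          -(((ℓ - 5) / 2 : ℕ) : ZMod (2 * ℓ)),
          (ℓ : ZMod (2 * ℓ))} : Set (ZMod (2 * ℓ)))) ∧
      -- (ii) if x₀ is a vertex of c then so is x₁
      (∀ x : ZMod (2 * ℓ), (∃ j, c j = (x, false)) → ∃ j, c j = (x, true)) ∧
      -- (iii) every translate of c is equitably 2-coloured
      (∀ t : ZMod (2 * ℓ), IsEquitable (stdColour ℓ) (cycTranslate t c)) := by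
  by_cases h11 : ℓ = 11
  · subst h11
    exact stmt7_eleven
  · obtain ⟨n, rfl, hn⟩ : ∃ n, ℓ = 4*n+3 ∧ 4 ≤ n := ⟨(ℓ-3)/4, by omega, by omega⟩
    exact stmt7_main n hn
end

section
/- Let ℓ ≥ 3 be odd, let s be odd with 3 ≤ s ≤ ℓ, and let A ⊆ Z_ℓ \ {0} be closed under negation. Suppose that the Cayley graph Cay[Z_ℓ, A] admits a Hamiltonian decomposition. Then the Cayley graph Cay[Z_s × Z_ℓ, Ω] with connection set Ω = {(ε, a) : ε ∈ {1, −1}, a ∈ A} admits an ℓ-cycle decomposition in which every cycle contains, for each y ∈ Z_ℓ, exactly one vertex whose second coordinate is y. Consequently, for any 2-colouring of the vertices of this graph of the form c(i, x) = c'(x) (depending only on the second coordinate), where c' colours (ℓ+1)/2 elements of Z_ℓ red and (ℓ−1)/2 blue, every cycle of this decomposition has (ℓ+1)/2 red and (ℓ−1)/2 blue vertices, i.e. the decomposition is equitably 2-coloured. -/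
/-- The Cayley graph of an additive group `G` with connection set `Ω`:
distinct `g`, `h` are adjacent iff `g - h ∈ Ω` (the definition is symmetrised;
when `Ω` is closed under negation, this says exactly `g ≠ h ∧ g - h ∈ Ω`). -/
def cayley {G : Type} [AddGroup G] (Ω : Set G) : SimpleGraph G where
  Adj g h := g ≠ h ∧ (g - h ∈ Ω ∨ h - g ∈ Ω)
  symm := ⟨fun _ _ ⟨h1, h2⟩ => ⟨h1.symm, h2.symm⟩⟩
  loopless := ⟨fun _ ⟨h1, _⟩ => h1 rfl⟩

/-- The edge set of the cycle represented by `c : ZMod n → V`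
(vertices listed in cyclic order). -/
def cycEdges {V : Type} {n : ℕ} (c : ZMod n → V) : Set (Sym2 V) :=
  Set.range fun j => s(c j, c (j + 1))

/-- The family `cyc` of `n`-cycles is an `n`-cycle decomposition of the graph `G`:
each `cyc i` is an injective cyclic sequence of adjacent vertices, and every edge
of `G` lies on exactly one of the cycles.  (When `V` has `n` elements, each such
cycle is a Hamiltonian cycle, so this is a Hamiltonian decomposition.) -/
def IsCycleDecomp {V : Type} {n : ℕ} (G : SimpleGraph V)
    {ι : Type} (cyc : ι → ZMod n → V) : Prop :=
  (∀ i, Function.Injective (cyc i)) ∧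
  (∀ i j, G.Adj (cyc i j) (cyc i (j + 1))) ∧
  (∀ e, e ∈ G.edgeSet ↔ ∃! i, e ∈ cycEdges (cyc i))

namespace Stmt9Aux

/-- The "first coordinate path": a closed walk of length `ℓ` in `ZMod s`
all of whose steps are `±1`. -/
def fm (ℓ s : ℕ) (j : ZMod ℓ) : ZMod s :=
  if j.val ≤ (ℓ + s) / 2 then ((j.val : ℕ) : ZMod s)
  else ((ℓ + s - j.val : ℕ) : ZMod s)

lemma fm_step {ℓ s : ℕ} [NeZero ℓ] (hℓ : 3 ≤ ℓ) (hs : 3 ≤ s) (hsℓ : s ≤ ℓ)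
    (hodd : Odd ℓ) (hsodd : Odd s) (j : ZMod ℓ) :
    fm ℓ s (j + 1) - fm ℓ s j = 1 ∨ fm ℓ s (j + 1) - fm ℓ s j = -1 := by
  obtain ⟨a, ha⟩ := hodd
  obtain ⟨b, hb⟩ := hsodd
  have hv : j.val < ℓ := ZMod.val_lt j
  set m := (ℓ + s) / 2 with hm
  have h2m : 2 * m = ℓ + s := by omega
  by_cases hlast : j.val = ℓ - 1
  · have hj : j = ((ℓ - 1 : ℕ) : ZMod ℓ) := by
      rw [← hlast]
      simp [ZMod.natCast_val, ZMod.cast_id]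
    have hj1 : j + 1 = 0 := by
      rw [hj, show ((ℓ - 1 : ℕ) : ZMod ℓ) + 1 = ((ℓ - 1 + 1 : ℕ) : ZMod ℓ) by push_cast; ring,
        show ℓ - 1 + 1 = ℓ by omega, ZMod.natCast_self]
    rw [hj1]
    have f0 : fm ℓ s 0 = 0 := by simp [fm]
    rw [f0]
    unfold fm
    rw [hlast]
    by_cases hcase : ℓ - 1 ≤ m
    · rw [if_pos hcase]
      have hcs : ℓ = s ∨ ℓ = s + 2 := by omega
      rcases hcs with h | h
      · left
        subst h
        rw [Nat.cast_sub (by omega), ZMod.natCast_self]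
        push_cast
        ring
      · right
        rw [h, show s + 2 - 1 = s + 1 by omega]
        push_cast [ZMod.natCast_self]
        ring
    · rw [if_neg hcase]
      right
      rw [show ℓ + s - (ℓ - 1) = s + 1 by omega]
      push_cast [ZMod.natCast_self]
      ring
  · have hv1 : j.val + 1 < ℓ := by omega
    have hjv : j + 1 = ((j.val + 1 : ℕ) : ZMod ℓ) := by
      push_cast [ZMod.natCast_val, ZMod.cast_id]
      ring
    have hval1 : (j + 1).val = j.val + 1 := by
      rw [hjv, ZMod.val_cast_of_lt hv1]
    unfold fm
    rw [hval1]
    by_cases h1 : j.val + 1 ≤ m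
    · rw [if_pos h1, if_pos (by omega)]
      left; push_cast; ring
    · rw [if_neg h1]
      by_cases h2 : j.val ≤ m
      · have hjm : j.val = m := by omega
        rw [if_pos h2, hjm]
        right
        rw [show ℓ + s - (m + 1) = m - 1 by omega, Nat.cast_sub (by omega)]
        push_cast
        ring
      · rw [if_neg h2]
        right
        rw [show ℓ + s - (j.val + 1) = (ℓ + s - j.val) - 1 by omega,
          Nat.cast_sub (by omega), Nat.cast_sub (by omega)]
        push_cast
        ring

lemma two_ne_zero' {n : ℕ} (hn : 3 ≤ n) : (2 : ZMod n) ≠ 0 := by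
  haveI : NeZero n := ⟨by omega⟩
  intro h
  have h2 : ((2 : ℕ) : ZMod n) = 0 := by exact_mod_cast h
  rw [ZMod.natCast_eq_zero_iff] at h2
  exact absurd (Nat.le_of_dvd (by norm_num) h2) (by omega)

lemma one_ne_neg_one' {n : ℕ} (hn : 3 ≤ n) : (1 : ZMod n) ≠ -1 := by
  intro h
  exact two_ne_zero' hn (by linear_combination h)

/-- Sign `±1` attached to a boolean. -/
def sg (s : ℕ) (b : Bool) : ZMod s := if b then 1 else -1

lemma sg_cases (s : ℕ) (b : Bool) : sg s b = 1 ∨ sg s b = -1 := by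
  cases b <;> simp [sg]

lemma sg_inj {s : ℕ} (hs : 3 ≤ s) {b b' : Bool} (h : sg s b = sg s b') : b = b' := by
  cases b <;> cases b' <;> simp_all [sg]
  · exact one_ne_neg_one' hs h.symm
  · exact one_ne_neg_one' hs h

/-- The cycles of the lifted decomposition. -/
def bigCyc (ℓ s : ℕ) {κ : Type} (ham : κ → ZMod ℓ → ZMod ℓ)
    (t : ZMod s × κ × Bool) (j : ZMod ℓ) : ZMod s × ZMod ℓ :=
  (t.1 + sg s t.2.2 * fm ℓ s j, ham t.2.1 j)

lemma bigCyc_adj {ℓ s : ℕ} {κ : Type} [NeZero ℓ]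
    (hℓ : 3 ≤ ℓ) (hodd : Odd ℓ) (hs : 3 ≤ s) (hsodd : Odd s) (hsℓ : s ≤ ℓ)
    (A : Set (ZMod ℓ)) (hAneg : ∀ a ∈ A, -a ∈ A)
    (ham : κ → ZMod ℓ → ZMod ℓ)
    (hadj : ∀ k j, (cayley A).Adj (ham k j) (ham k (j + 1)))
    (t : ZMod s × κ × Bool) (j : ZMod ℓ) :
    (cayley {p : ZMod s × ZMod ℓ | (p.1 = 1 ∨ p.1 = -1) ∧ p.2 ∈ A}).Adj
      (bigCyc ℓ s ham t j) (bigCyc ℓ s ham t (j + 1)) := by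
  obtain ⟨i, k, b⟩ := t
  refine ⟨fun h => (hadj k j).1 (congrArg Prod.snd h), Or.inl ⟨?_, ?_⟩⟩
  · show (bigCyc ℓ s ham (i, k, b) j - bigCyc ℓ s ham (i, k, b) (j + 1)).1 = 1 ∨
      (bigCyc ℓ s ham (i, k, b) j - bigCyc ℓ s ham (i, k, b) (j + 1)).1 = -1
    simp only [bigCyc, Prod.mk_sub_mk]
    rcases sg_cases s b with hσ | hσ <;>
      rcases fm_step hℓ hs hsℓ hodd hsodd j with hd | hd
    · right; rw [hσ]; linear_combination -hd
    · left; rw [hσ]; linear_combination -hd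
    · left; rw [hσ]; linear_combination hd
    · right; rw [hσ]; linear_combination hd
  · show (bigCyc ℓ s ham (i, k, b) j - bigCyc ℓ s ham (i, k, b) (j + 1)).2 ∈ A
    simp only [bigCyc, Prod.mk_sub_mk]
    rcases (hadj k j).2 with h | h
    · exact h
    · have h' := hAneg _ h
      rwa [neg_sub] at h'

lemma bigCyc_uniq {ℓ s : ℕ} {κ : Type} [NeZero ℓ]
    (hℓ : 3 ≤ ℓ) (hodd : Odd ℓ) (hs : 3 ≤ s) (hsodd : Odd s) (hsℓ : s ≤ ℓ)
    (A : Set (ZMod ℓ))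
    (ham : κ → ZMod ℓ → ZMod ℓ)
    (hinj : ∀ k, Function.Injective (ham k))
    (hadj : ∀ k j, (cayley A).Adj (ham k j) (ham k (j + 1)))
    (huniq : ∀ e, e ∈ (cayley A).edgeSet ↔ ∃! k, e ∈ cycEdges (ham k))
    {t1 t2 : ZMod s × κ × Bool} {j1 j2 : ZMod ℓ}
    (h : s(bigCyc ℓ s ham t1 j1, bigCyc ℓ s ham t1 (j1 + 1)) =
         s(bigCyc ℓ s ham t2 j2, bigCyc ℓ s ham t2 (j2 + 1))) : t1 = t2 := by
  obtain ⟨i1, k1, b1⟩ := t1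
  obtain ⟨i2, k2, b2⟩ := t2
  have htwo : (1 : ZMod ℓ) + 1 ≠ 0 := by
    intro hh
    exact two_ne_zero' hℓ (by linear_combination hh)
  have hsnd := congrArg (Sym2.map Prod.snd) h
  rw [Sym2.map_pair_eq, Sym2.map_pair_eq] at hsnd
  have hsnd' : s(ham k1 j1, ham k1 (j1 + 1)) = s(ham k2 j2, ham k2 (j2 + 1)) := hsnd
  have hk : k1 = k2 := by
    have he1 : s(ham k1 j1, ham k1 (j1 + 1)) ∈ cycEdges (ham k1) := ⟨j1, rfl⟩
    have he2 : s(ham k1 j1, ham k1 (j1 + 1)) ∈ cycEdges (ham k2) := ⟨j2, hsnd'.symm⟩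
    have hedge : s(ham k1 j1, ham k1 (j1 + 1)) ∈ (cayley A).edgeSet := hadj k1 j1
    obtain ⟨k, -, hku⟩ := (huniq _).mp hedge
    rw [hku k1 he1, hku k2 he2]
  subst hk
  rw [Sym2.eq_iff] at h
  rcases h with ⟨h1, h2⟩ | ⟨h1, h2⟩
  · -- aligned
    have hj : j1 = j2 := hinj k1 (congrArg Prod.snd h1)
    subst hj
    have e1 : i1 + sg s b1 * fm ℓ s j1 = i2 + sg s b2 * fm ℓ s j1 :=
      congrArg Prod.fst h1
    have e2 : i1 + sg s b1 * fm ℓ s (j1 + 1) = i2 + sg s b2 * fm ℓ s (j1 + 1) :=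
      congrArg Prod.fst h2
    have hd0 : (sg s b1 - sg s b2) * (fm ℓ s (j1 + 1) - fm ℓ s j1) = 0 := by
      linear_combination e2 - e1
    have hσ : sg s b1 = sg s b2 := by
      rcases fm_step hℓ hs hsℓ hodd hsodd j1 with hd | hd <;> rw [hd] at hd0
      · linear_combination hd0
      · linear_combination -hd0
    have hb : b1 = b2 := sg_inj hs hσ
    subst hb
    have hi : i1 = i2 := by linear_combination e1
    rw [hi]
  · -- crossed: impossible
    exfalso
    have hj1 : j1 = j2 + 1 := hinj k1 (congrArg Prod.snd h1)
    have hj2 : j1 + 1 = j2 := hinj k1 (congrArg Prod.snd h2)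
    have hcon : j1 = j1 + (1 + 1) := by rw [← add_assoc, hj2, ← hj1]
    exact htwo (left_eq_add.mp hcon)

lemma bigCyc_exists_aux {ℓ s : ℕ} {κ : Type} [NeZero ℓ]
    (hℓ : 3 ≤ ℓ) (hodd : Odd ℓ) (hs : 3 ≤ s) (hsodd : Odd s) (hsℓ : s ≤ ℓ)
    (A : Set (ZMod ℓ))
    (ham : κ → ZMod ℓ → ZMod ℓ)
    {p q : ZMod s × ZMod ℓ}
    (hδ : p.1 - q.1 = 1 ∨ p.1 - q.1 = -1)
    {k : κ} {j : ZMod ℓ} (hx : ham k j = p.2) (hy : ham k (j + 1) = q.2) :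
    ∃ t, s(p, q) ∈ cycEdges (bigCyc ℓ s ham t) := by
  obtain ⟨b, hb⟩ : ∃ b, sg s b * (fm ℓ s (j + 1) - fm ℓ s j) = q.1 - p.1 := by
    rcases fm_step hℓ hs hsℓ hodd hsodd j with h1 | h1 <;> rcases hδ with h2 | h2
    · exact ⟨false, by rw [h1]; simp only [sg, if_false, Bool.false_eq_true]; linear_combination h2⟩
    · exact ⟨true, by rw [h1]; simp only [sg, if_true]; linear_combination h2⟩
    · exact ⟨true, by rw [h1]; simp only [sg, if_true]; linear_combination h2⟩
    · exact ⟨false, by rw [h1]; simp only [sg, if_false, Bool.false_eq_true]; linear_combination h2⟩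
  refine ⟨(p.1 - sg s b * fm ℓ s j, k, b), j, ?_⟩
  have hp : bigCyc ℓ s ham (p.1 - sg s b * fm ℓ s j, k, b) j = p := by
    refine Prod.ext ?_ hx
    show p.1 - sg s b * fm ℓ s j + sg s b * fm ℓ s j = p.1
    ring
  have hq : bigCyc ℓ s ham (p.1 - sg s b * fm ℓ s j, k, b) (j + 1) = q := by
    refine Prod.ext ?_ hy
    show p.1 - sg s b * fm ℓ s j + sg s b * fm ℓ s (j + 1) = q.1
    linear_combination hb
  show s(bigCyc ℓ s ham (p.1 - sg s b * fm ℓ s j, k, b) j,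
      bigCyc ℓ s ham (p.1 - sg s b * fm ℓ s j, k, b) (j + 1)) = s(p, q)
  rw [hp, hq]

lemma bigCyc_exists {ℓ s : ℕ} {κ : Type} [NeZero ℓ]
    (hℓ : 3 ≤ ℓ) (hodd : Odd ℓ) (hs : 3 ≤ s) (hsodd : Odd s) (hsℓ : s ≤ ℓ)
    (A : Set (ZMod ℓ)) (hA0 : (0 : ZMod ℓ) ∉ A) (hAneg : ∀ a ∈ A, -a ∈ A)
    (ham : κ → ZMod ℓ → ZMod ℓ)
    (huniq : ∀ e, e ∈ (cayley A).edgeSet ↔ ∃! k, e ∈ cycEdges (ham k))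
    {p q : ZMod s × ZMod ℓ}
    (hδ : p.1 - q.1 = 1 ∨ p.1 - q.1 = -1) (hd : p.2 - q.2 ∈ A) :
    ∃ t, s(p, q) ∈ cycEdges (bigCyc ℓ s ham t) := by
  have hne : p.2 ≠ q.2 := by
    intro hh
    rw [hh, sub_self] at hd
    exact hA0 hd
  have hedge : s(p.2, q.2) ∈ (cayley A).edgeSet := ⟨hne, Or.inl hd⟩
  obtain ⟨k, ⟨j, hj⟩, -⟩ := (huniq _).mp hedge
  rw [Sym2.eq_iff] at hj
  rcases hj with ⟨h1, h2⟩ | ⟨h1, h2⟩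
  · exact bigCyc_exists_aux hℓ hodd hs hsodd hsℓ A ham hδ h1 h2
  · have hδ' : q.1 - p.1 = 1 ∨ q.1 - p.1 = -1 := by
      rcases hδ with h | h
      · right; linear_combination -h
      · left; linear_combination -h
    obtain ⟨t, ht⟩ := bigCyc_exists_aux hℓ hodd hs hsodd hsℓ A ham hδ' h1 h2
    exact ⟨t, by rwa [Sym2.eq_swap] at ht⟩

lemma card_filter_comp {ℓ : ℕ} [NeZero ℓ] (g : ZMod ℓ → ZMod ℓ)
    (hg : Function.Bijective g) (P : ZMod ℓ → Prop) [DecidablePred P] :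
    (Finset.univ.filter fun j => P (g j)).card = (Finset.univ.filter P).card := by
  refine Finset.card_bij (fun j _ => g j) ?_ ?_ ?_
  · intro a ha
    simp only [Finset.mem_filter, Finset.mem_univ, true_and] at ha ⊢
    exact ha
  · intro a _ b _ h
    exact hg.1 h
  · intro x hx
    simp only [Finset.mem_filter, Finset.mem_univ, true_and] at hx
    obtain ⟨j, hj⟩ := hg.2 x
    exact ⟨j, by simp [Finset.mem_filter, hj, hx], hj⟩

end Stmt9Aux

theorem stmt9 (ℓ s : ℕ) (hℓ : 3 ≤ ℓ) (hodd : Odd ℓ)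
    (hs : 3 ≤ s) (hsodd : Odd s) (hsℓ : s ≤ ℓ)
    (A : Set (ZMod ℓ)) (hA0 : (0 : ZMod ℓ) ∉ A) (hAneg : ∀ a ∈ A, -a ∈ A)
    -- `Cay[Z_ℓ, A]` admits a Hamiltonian decomposition
    (hham : ∃ (κ : Type) (ham : κ → ZMod ℓ → ZMod ℓ), IsCycleDecomp (cayley A) ham) :
    letI : NeZero ℓ := ⟨by omega⟩
    ∃ (ι : Type) (cyc : ι → ZMod ℓ → ZMod s × ZMod ℓ),
      -- an ℓ-cycle decomposition of `Cay[Z_s × Z_ℓ, {±1} × A]` ...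
      IsCycleDecomp (cayley {p : ZMod s × ZMod ℓ | (p.1 = 1 ∨ p.1 = -1) ∧ p.2 ∈ A}) cyc ∧
      -- ... each of whose cycles meets every "column" exactly once, ...
      (∀ i, ∀ y : ZMod ℓ, ∃! j : ZMod ℓ, (cyc i j).2 = y) ∧
      -- ... hence is equitably 2-coloured under any colouring depending only on
      -- the second coordinate with (ℓ+1)/2 red and (ℓ-1)/2 blue elements
      (∀ c' : ZMod ℓ → Bool,
        (Finset.univ.filter fun x => c' x = true).card = (ℓ + 1) / 2 →
        (Finset.univ.filter fun x => c' x = false).card = (ℓ - 1) / 2 →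
        ∀ i,
          (Finset.univ.filter fun j : ZMod ℓ => c' ((cyc i j).2) = true).card
              = (ℓ + 1) / 2 ∧
          (Finset.univ.filter fun j : ZMod ℓ => c' ((cyc i j).2) = false).card
              = (ℓ - 1) / 2) := by
  obtain ⟨κ, ham, hinj, hadj, huniq⟩ := hham
  haveI : NeZero ℓ := ⟨by omega⟩
  have hbij : ∀ k, Function.Bijective (ham k) :=
    fun k => Finite.injective_iff_bijective.mp (hinj k)
  refine ⟨ZMod s × κ × Bool, Stmt9Aux.bigCyc ℓ s ham, ⟨?_, ?_, ?_⟩, ?_, ?_⟩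
  · -- injectivity of each cycle
    intro t j1 j2 h
    exact hinj t.2.1 (congrArg Prod.snd h)
  · -- adjacency along each cycle
    intro t j
    exact Stmt9Aux.bigCyc_adj hℓ hodd hs hsodd hsℓ A hAneg ham hadj t j
  · -- each edge on exactly one cycle
    intro e
    constructor
    · intro he
      induction e using Sym2.ind with
      | _ p q =>
        rw [SimpleGraph.mem_edgeSet] at he
        obtain ⟨hne, hmem⟩ := he
        have hex : ∃ t, s(p, q) ∈ cycEdges (Stmt9Aux.bigCyc ℓ s ham t) := by
          rcases hmem with hm | hm
          · exact Stmt9Aux.bigCyc_exists hℓ hodd hs hsodd hsℓ A hA0 hAneg ham huniq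
              hm.1 hm.2
          · obtain ⟨t, ht⟩ := Stmt9Aux.bigCyc_exists hℓ hodd hs hsodd hsℓ A hA0 hAneg
              ham huniq hm.1 hm.2
            exact ⟨t, by rwa [Sym2.eq_swap] at ht⟩
        obtain ⟨t, ht⟩ := hex
        refine ⟨t, ht, ?_⟩
        intro t' ht'
        obtain ⟨j', hj'⟩ := ht'
        obtain ⟨j0, hj0⟩ := ht
        exact Stmt9Aux.bigCyc_uniq hℓ hodd hs hsodd hsℓ A ham hinj hadj huniq
          (hj'.trans hj0.symm)
    · rintro ⟨t, ⟨j, hj⟩, -⟩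
      rw [← hj]
      exact (SimpleGraph.mem_edgeSet _).mpr
        (Stmt9Aux.bigCyc_adj hℓ hodd hs hsodd hsℓ A hAneg ham hadj t j)
  · -- each cycle meets each column exactly once
    intro t y
    exact (hbij t.2.1).existsUnique y
  · -- equitable colouring
    intro c' h1 h2 t
    constructor
    · exact (Stmt9Aux.card_filter_comp (ham t.2.1) (hbij t.2.1)
        (fun x => c' x = true)).trans h1
    · exact (Stmt9Aux.card_filter_comp (ham t.2.1) (hbij t.2.1)
        (fun x => c' x = false)).trans h2
end

section
/- There exist a 2-colouring of the vertices of C_5[7] in which each of the five parts contains exactly four red vertices and three blue vertices, and a 7-cycle decomposition of C_5[7] that is equitable with respect to this colouring. -/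
/-- The lexicographic product `C_s[n]` of the `s`-cycle with the empty graph on
`n` vertices, as a graph on `ZMod s × ZMod n`: `(a,x)` and `(b,y)` are adjacent
iff `a - b = ±1`. -/
def cycLex (s n : ℕ) : SimpleGraph (ZMod s × ZMod n) :=
  cayley {p : ZMod s × ZMod n | p.1 = 1 ∨ p.1 = -1}

/-! ### Explicit witnesses -/

/-- Second coordinates of the seven base cycles. -/
def Xtab : Fin 7 → Fin 7 → ZMod 7 :=
  ![![0, 2, 2, 3, 6, 1, 0],
    ![1, 1, 0, 3, 1, 5, 5],
    ![3, 5, 6, 0, 4, 1, 4],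
    ![5, 4, 4, 2, 5, 2, 0],
    ![6, 3, 3, 4, 5, 3, 0],
    ![4, 0, 5, 6, 2, 1, 2],
    ![6, 6, 1, 3, 2, 6, 4]]

/-- Part (first-coordinate) pattern of every base cycle. -/
def Ptab : Fin 7 → ZMod 5 := ![0, 1, 0, 1, 2, 3, 4]

def f7 (j : ZMod 7) : Fin 7 := ⟨j.val, ZMod.val_lt j⟩

def Pf (j : ZMod 7) : ZMod 5 := Ptab (f7 j)

def Xf (k : Fin 7) (j : ZMod 7) : ZMod 7 := Xtab k (f7 j)

/-- The 35 cycles: base cycle `i.1` translated in its first coordinate by `i.2`. -/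
def mycyc (i : Fin 7 × ZMod 5) (j : ZMod 7) : ZMod 5 × ZMod 7 :=
  (Pf j + i.2, Xf i.1 j)

/-- Red iff second coordinate lies in `{1,2,3,4}`. -/
def mycol (p : ZMod 5 × ZMod 7) : Bool :=
  decide (p.2 = 1 ∨ p.2 = 2 ∨ p.2 = 3 ∨ p.2 = 4)

lemma part_counts : ∀ a : ZMod 5,
    (Finset.univ.filter fun x : ZMod 7 => mycol (a, x) = true).card = 4 ∧
    (Finset.univ.filter fun x : ZMod 7 => mycol (a, x) = false).card = 3 := by
  decide

lemma inj' : ∀ (i : Fin 7 × ZMod 5) (a b : ZMod 7), mycyc i a = mycyc i b → a = b := by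
  decide

lemma adj' : ∀ (i : Fin 7 × ZMod 5) (j : ZMod 7),
    mycyc i j ≠ mycyc i (j + 1) ∧
      (((mycyc i j - mycyc i (j + 1)).1 = 1 ∨ (mycyc i j - mycyc i (j + 1)).1 = -1) ∨
        ((mycyc i (j + 1) - mycyc i j).1 = 1 ∨ (mycyc i (j + 1) - mycyc i j).1 = -1)) := by
  decide

lemma redcount' : ∀ i : Fin 7 × ZMod 5,
    (Finset.univ.filter fun j : ZMod 7 => mycol (mycyc i j) = true).card = 4 := by
  decide

set_option maxRecDepth 100000 in
lemma L1a : ∀ (k k' : Fin 7) (j j' : ZMod 7),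
    Xf k j = Xf k' j' → Xf k (j + 1) = Xf k' (j' + 1) →
    Pf j - Pf (j + 1) = Pf j' - Pf (j' + 1) → k = k' ∧ j = j' := by
  decide

set_option maxRecDepth 100000 in
lemma L1b : ∀ (k k' : Fin 7) (j j' : ZMod 7),
    Xf k j = Xf k' (j' + 1) → Xf k (j + 1) = Xf k' j' →
    Pf j - Pf (j + 1) = Pf (j' + 1) - Pf j' → False := by
  decide

set_option maxRecDepth 100000 in
lemma L2x : ∀ x y : ZMod 7, ∃ (k : Fin 7) (j : ZMod 7),
    (Xf k j = x ∧ Xf k (j + 1) = y ∧ Pf (j + 1) = Pf j + 1) ∨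
    (Xf k j = y ∧ Xf k (j + 1) = x ∧ Pf j = Pf (j + 1) + 1) := by
  decide

lemma zmod5cases : ∀ a b : ZMod 5,
    ((a - b = 1 ∨ a - b = -1) ∨ (b - a = 1 ∨ b - a = -1)) → (b = a + 1 ∨ a = b + 1) := by
  decide

lemma helper1 (i i' : Fin 7 × ZMod 5) (j j' : ZMod 7)
    (e1 : mycyc i j = mycyc i' j') (e2 : mycyc i (j + 1) = mycyc i' (j' + 1)) :
    i = i' := by
  have p1 : Pf j + i.2 = Pf j' + i'.2 := congrArg Prod.fst e1
  have p2 : Pf (j + 1) + i.2 = Pf (j' + 1) + i'.2 := congrArg Prod.fst e2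
  have x1 : Xf i.1 j = Xf i'.1 j' := congrArg Prod.snd e1
  have x2 : Xf i.1 (j + 1) = Xf i'.1 (j' + 1) := congrArg Prod.snd e2
  obtain ⟨hk, hj⟩ := L1a i.1 i'.1 j j' x1 x2 (by linear_combination p1 - p2)
  have hs : i.2 = i'.2 := by
    rw [hj] at p1
    exact add_left_cancel p1
  exact Prod.ext hk hs

lemma helper2 (i i' : Fin 7 × ZMod 5) (j j' : ZMod 7)
    (e1 : mycyc i j = mycyc i' (j' + 1)) (e2 : mycyc i (j + 1) = mycyc i' j') :
    False := by
  have p1 : Pf j + i.2 = Pf (j' + 1) + i'.2 := congrArg Prod.fst e1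
  have p2 : Pf (j + 1) + i.2 = Pf j' + i'.2 := congrArg Prod.fst e2
  have x1 : Xf i.1 j = Xf i'.1 (j' + 1) := congrArg Prod.snd e1
  have x2 : Xf i.1 (j + 1) = Xf i'.1 j' := congrArg Prod.snd e2
  exact L1b i.1 i'.1 j j' x1 x2 (by linear_combination p1 - p2)

lemma uniq (i i' : Fin 7 × ZMod 5) (j j' : ZMod 7) (v w : ZMod 5 × ZMod 7)
    (h : (mycyc i j = v ∧ mycyc i (j + 1) = w) ∨ (mycyc i j = w ∧ mycyc i (j + 1) = v))
    (h' : (mycyc i' j' = v ∧ mycyc i' (j' + 1) = w) ∨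
          (mycyc i' j' = w ∧ mycyc i' (j' + 1) = v)) :
    i = i' := by
  rcases h with ⟨a1, a2⟩ | ⟨a1, a2⟩ <;> rcases h' with ⟨b1, b2⟩ | ⟨b1, b2⟩
  · exact helper1 i i' j j' (a1.trans b1.symm) (a2.trans b2.symm)
  · exact (helper2 i i' j j' (a1.trans b2.symm) (a2.trans b1.symm)).elim
  · exact (helper2 i i' j j' (a1.trans b2.symm) (a2.trans b1.symm)).elim
  · exact helper1 i i' j j' (a1.trans b1.symm) (a2.trans b2.symm)

theorem stmt12 :
    ∃ (colour : ZMod 5 × ZMod 7 → Bool) (ι : Type)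
        (cyc : ι → ZMod 7 → ZMod 5 × ZMod 7),
      -- each of the five parts has exactly four red and three blue vertices
      (∀ a : ZMod 5,
        (Finset.univ.filter fun x : ZMod 7 => colour (a, x) = true).card = 4 ∧
        (Finset.univ.filter fun x : ZMod 7 => colour (a, x) = false).card = 3) ∧
      -- a 7-cycle decomposition of C_5[7], equitable for this colouring
      IsCycleDecomp (cycLex 5 7) cyc ∧
      (∀ i, IsEquitable colour (cyc i)) := by
  refine ⟨mycol, Fin 7 × ZMod 5, mycyc, part_counts, ⟨?_, ?_, ?_⟩, ?_⟩
  · exact fun i a b h => inj' i a b h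
  · exact fun i j => adj' i j
  · intro e
    induction e using Sym2.ind with
    | _ v w =>
      obtain ⟨a, x⟩ := v
      obtain ⟨b, y⟩ := w
      rw [SimpleGraph.mem_edgeSet]
      constructor
      · intro h
        have hd : b = a + 1 ∨ a = b + 1 := zmod5cases a b h.2
        rcases hd with hb | hb
        · obtain ⟨k, j, hc⟩ := L2x x y
          rcases hc with ⟨h1, h2, hP⟩ | ⟨h1, h2, hP⟩
          · have ha1 : mycyc (k, a - Pf j) j = (a, x) :=
              Prod.ext (show Pf j + (a - Pf j) = a by ring) h1
            have ha2 : mycyc (k, a - Pf j) (j + 1) = (b, y) :=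
              Prod.ext (show Pf (j + 1) + (a - Pf j) = b by rw [hP, hb]; ring) h2
            refine ⟨(k, a - Pf j), ⟨j, Sym2.eq_iff.mpr (Or.inl ⟨ha1, ha2⟩)⟩, ?_⟩
            rintro i' ⟨j', hj'⟩
            exact uniq i' (k, a - Pf j) j' j (a, x) (b, y) (Sym2.eq_iff.mp hj')
              (Or.inl ⟨ha1, ha2⟩)
          · have ha1 : mycyc (k, a - Pf (j + 1)) j = (b, y) :=
              Prod.ext (show Pf j + (a - Pf (j + 1)) = b by rw [hP, hb]; ring) h1
            have ha2 : mycyc (k, a - Pf (j + 1)) (j + 1) = (a, x) :=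
              Prod.ext (show Pf (j + 1) + (a - Pf (j + 1)) = a by ring) h2
            refine ⟨(k, a - Pf (j + 1)), ⟨j, Sym2.eq_iff.mpr (Or.inr ⟨ha1, ha2⟩)⟩, ?_⟩
            rintro i' ⟨j', hj'⟩
            exact uniq i' (k, a - Pf (j + 1)) j' j (a, x) (b, y) (Sym2.eq_iff.mp hj')
              (Or.inr ⟨ha1, ha2⟩)
        · obtain ⟨k, j, hc⟩ := L2x y x
          rcases hc with ⟨h1, h2, hP⟩ | ⟨h1, h2, hP⟩
          · have ha1 : mycyc (k, b - Pf j) j = (b, y) :=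
              Prod.ext (show Pf j + (b - Pf j) = b by ring) h1
            have ha2 : mycyc (k, b - Pf j) (j + 1) = (a, x) :=
              Prod.ext (show Pf (j + 1) + (b - Pf j) = a by rw [hP, hb]; ring) h2
            refine ⟨(k, b - Pf j), ⟨j, Sym2.eq_iff.mpr (Or.inr ⟨ha1, ha2⟩)⟩, ?_⟩
            rintro i' ⟨j', hj'⟩
            exact uniq i' (k, b - Pf j) j' j (a, x) (b, y) (Sym2.eq_iff.mp hj')
              (Or.inr ⟨ha1, ha2⟩)
          · have ha1 : mycyc (k, b - Pf (j + 1)) j = (a, x) :=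
              Prod.ext (show Pf j + (b - Pf (j + 1)) = a by rw [hP, hb]; ring) h1
            have ha2 : mycyc (k, b - Pf (j + 1)) (j + 1) = (b, y) :=
              Prod.ext (show Pf (j + 1) + (b - Pf (j + 1)) = b by ring) h2
            refine ⟨(k, b - Pf (j + 1)), ⟨j, Sym2.eq_iff.mpr (Or.inl ⟨ha1, ha2⟩)⟩, ?_⟩
            rintro i' ⟨j', hj'⟩
            exact uniq i' (k, b - Pf (j + 1)) j' j (a, x) (b, y) (Sym2.eq_iff.mp hj')
              (Or.inl ⟨ha1, ha2⟩)
      · rintro ⟨i, ⟨j, hj⟩, -⟩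
        rcases Sym2.eq_iff.mp hj with ⟨h1, h2⟩ | ⟨h1, h2⟩
        · rw [← h1, ← h2]
          exact adj' i j
        · rw [← h1, ← h2]
          exact (cycLex 5 7).adj_symm (adj' i j)
  · exact fun i => Or.inr (redcount' i)
end
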